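/- arXiv:2111.09475 — 3 statements merged into one kernel-verified Lean document; each statement's English description precedes it below -/
import Mathlib

section
/- For any SLTL formulas φ₁, φ₂, φ₃, a trace satisfies (φ₁ ∼ φ₂) ∧ (φ₁ ∼ φ₃) if and only if it satisfies φ₁ ∼ (φ₂ ∧ φ₃). -/
/-- Syntax of SLTL: LTL (⊤, atoms, ¬, ∧, ○, U) extended with the binary
"then" operator `∼`. -/
inductive SLTL (P : Type) : Type
  | tt : SLTL P
  | atom : P → SLTL P
  | neg : SLTL P → SLTL P
  | and : SLTL P → SLTL P → SLTL P
  | next : SLTL P → SLTL P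
  | untl : SLTL P → SLTL P → SLTL P
  | then_ : SLTL P → SLTL P → SLTL P
  deriving DecidableEq

namespace SLTL

def or {P : Type} (φ ψ : SLTL P) : SLTL P := .neg (.and (.neg φ) (.neg ψ))
def ff {P : Type} : SLTL P := .neg .tt
def ev {P : Type} (φ : SLTL P) : SLTL P := .untl .tt φ

end SLTL

variable {P : Type} [DecidableEq P]

/-- the suffix trace λ^i -/
def shift (σ : ℕ → Finset P) (i : ℕ) : ℕ → Finset P := fun k => σ (k + i)

/-- Finite-prefix satisfaction: `FinSat σ n φ` means the finite prefix
`l₀ l₁ ⋯ lₙ` of the trace `σ` satisfies `φ` (finite-trace semantics). -/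
def FinSat : (ℕ → Finset P) → ℕ → SLTL P → Prop
  | _, _, .tt => True
  | σ, _, .atom p => p ∈ σ 0
  | σ, n, .neg φ => ¬ FinSat σ n φ
  | σ, n, .and φ ψ => FinSat σ n φ ∧ FinSat σ n ψ
  | σ, n, .next φ => 1 ≤ n ∧ FinSat (shift σ 1) (n - 1) φ
  | σ, n, .untl φ ψ =>
      ∃ j ≤ n, FinSat (shift σ j) (n - j) ψ ∧ ∀ i < j, FinSat (shift σ i) (n - i) φ
  | σ, n, .then_ φ ψ =>
      if φ = .tt then FinSat σ n ψ
      else ∃ j, j + 1 ≤ n ∧ FinSat σ j φ ∧ FinSat (shift σ (j + 1)) (n - (j + 1)) ψ ∧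
        ∀ i < j, ¬ FinSat σ i φ

/-- Satisfaction of SLTL over an infinite trace `σ : ℕ → Finset P`.
For `φ ≠ ⊤`, `σ ⊨ φ ∼ ψ` iff there is a minimal `j` such that the prefix
`l₀⋯lⱼ` satisfies `φ` and the suffix `λ^{j+1}` satisfies `ψ`. -/
def Sat : (ℕ → Finset P) → SLTL P → Prop
  | _, .tt => True
  | σ, .atom p => p ∈ σ 0
  | σ, .neg φ => ¬ Sat σ φ
  | σ, .and φ ψ => Sat σ φ ∧ Sat σ ψ
  | σ, .next φ => Sat (shift σ 1) φ
  | σ, .untl φ ψ => ∃ j, Sat (shift σ j) ψ ∧ ∀ i < j, Sat (shift σ i) φ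
  | σ, .then_ φ ψ =>
      if φ = .tt then Sat σ ψ
      else ∃ j, FinSat σ j φ ∧ Sat (shift σ (j + 1)) ψ ∧ ∀ i < j, ¬ FinSat σ i φ

/-- SLTL progression by a label `l`. -/
def prog : SLTL P → Finset P → SLTL P
  | .tt, _ => .tt
  | .atom p, l => if p ∈ l then .tt else .ff
  | .neg φ, l => .neg (prog φ l)
  | .and φ ψ, l => .and (prog φ l) (prog ψ l)
  | .next φ, _ => φ
  | .untl φ ψ, l => .or (prog ψ l) (.and (prog φ l) (.untl φ ψ))
  | .then_ φ ψ, l => if φ = .tt then prog ψ l else .then_ (prog φ l) ψ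

/-- A formula is a pure LTL formula iff it contains no `then` operator. -/
def isLTL : SLTL P → Prop
  | .tt => True
  | .atom _ => True
  | .neg φ => isLTL φ
  | .and φ ψ => isLTL φ ∧ isLTL ψ
  | .next φ => isLTL φ
  | .untl φ ψ => isLTL φ ∧ isLTL ψ
  | .then_ _ _ => False

/-- Iterated progression along a trace: φ₀ = φ, φ_{k+1} = prog(φₖ, lₖ). -/
def progIter (σ : ℕ → Finset P) (φ : SLTL P) : ℕ → SLTL P
  | 0 => φ
  | k + 1 => prog (progIter σ φ k) (σ k)

/-- Prefix satisfaction of `φ` is upward-closed (co-safety style): once a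
prefix satisfies `φ`, every longer prefix does. -/
def upwardClosed (φ : SLTL P) : Prop :=
  ∀ (σ : ℕ → Finset P) (i j : ℕ), i ≤ j → FinSat σ i φ → FinSat σ j φ

/-- (φ₁ ∼ φ₂) ∧ (φ₁ ∼ φ₃) = φ₁ ∼ (φ₂ ∧ φ₃). -/
theorem then_and_distrib_left (φ₁ φ₂ φ₃ : SLTL P) (σ : ℕ → Finset P) :
    Sat σ (.and (.then_ φ₁ φ₂) (.then_ φ₁ φ₃)) ↔ Sat σ (.then_ φ₁ (.and φ₂ φ₃)) := by
  by_cases h : φ₁ = SLTL.tt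
  · simp [Sat, h]
  · simp only [Sat, h, if_false]
    constructor
    · rintro ⟨⟨j, hj1, hj2, hj3⟩, ⟨k, hk1, hk2, hk3⟩⟩
      have hjk : j = k := by
        by_contra hne
        rcases lt_or_gt_of_ne hne with hlt | hlt
        · exact hk3 j hlt hj1
        · exact hj3 k hlt hk1
      subst hjk
      exact ⟨j, hj1, ⟨hj2, hk2⟩, hj3⟩
    · rintro ⟨j, h1, ⟨h2, h3⟩, h4⟩
      exact ⟨⟨j, h1, h2, h4⟩, ⟨j, h1, h3, h4⟩⟩
end

section
/- For any SLTL formulas φ₁, φ₂, φ₃, a trace satisfies (φ₁ ∼ φ₂) ∨ (φ₁ ∼ φ₃) if and only if it satisfies φ₁ ∼ (φ₂ ∨ φ₃). -/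
variable {P : Type} [DecidableEq P]

/-- (φ₁ ∼ φ₂) ∨ (φ₁ ∼ φ₃) = φ₁ ∼ (φ₂ ∨ φ₃). -/
theorem then_or_distrib_left (φ₁ φ₂ φ₃ : SLTL P) (σ : ℕ → Finset P) :
    Sat σ (SLTL.or (.then_ φ₁ φ₂) (.then_ φ₁ φ₃)) ↔ Sat σ (.then_ φ₁ (SLTL.or φ₂ φ₃)) := by
  simp only [SLTL.or, Sat]
  by_cases h : φ₁ = SLTL.tt
  · simp only [h, if_true, Sat]
  · simp only [h, if_false, Sat]
    constructor
    · rintro hor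
      rcases not_and_or.mp hor with h1 | h1 <;>
        rcases not_not.mp h1 with ⟨j, hj, hs, hmin⟩ <;>
        exact ⟨j, hj, by tauto, hmin⟩
    · rintro ⟨j, hj, hs, hmin⟩
      rcases not_and_or.mp hs with h1 | h1 <;> rw [not_not] at h1
      · exact fun ⟨a, _⟩ => a ⟨j, hj, h1, hmin⟩
      · exact fun ⟨_, b⟩ => b ⟨j, hj, h1, hmin⟩
end

section
/- For any LTL formula φ over propositional variables P, any infinite sequence of labels λ = l₀l₁⋯, and any index i ≥ 0: the suffix λ^i satisfies φ if and only if the suffix λ^{i+1} satisfies prog(φ, lᵢ), where prog is LTL progression. -/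
variable {P : Type} [DecidableEq P]

lemma shift_shift (σ : ℕ → Finset P) (a b : ℕ) :
    shift (shift σ a) b = shift σ (b + a) := by
  funext k; simp [shift, Nat.add_assoc]

lemma prog_correct_aux (φ : SLTL P) (hφ : isLTL φ) (τ : ℕ → Finset P) :
    Sat τ φ ↔ Sat (shift τ 1) (prog φ (τ 0)) := by
  induction φ generalizing τ with
  | tt => simp [Sat, prog]
  | atom p =>
      by_cases h : p ∈ τ 0
      · simp [Sat, prog, h]
      · simp [Sat, prog, h, SLTL.ff]
  | neg φ ih => simp [Sat, prog, ih hφ]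
  | and φ ψ ihφ ihψ => simp [Sat, prog, ihφ hφ.1, ihψ hφ.2]
  | next φ ih => simp [Sat, prog]
  | untl φ ψ ihφ ihψ =>
      simp only [Sat, prog, SLTL.or]
      constructor
      · rintro ⟨j, hψj, hφj⟩
        rcases j with _ | k
        · intro h
          exact h.1 ((ihψ hφ.2 τ).mp (by unfold shift at hψj; simpa using hψj))
        · intro h
          apply h.2
          refine ⟨(ihφ hφ.1 τ).mp (by have h0 := hφj 0 (Nat.succ_pos k); unfold shift at h0; simpa using h0), ?_⟩
          refine ⟨k, ?_, ?_⟩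
          · rw [shift_shift]; exact hψj
          · intro i hi; rw [shift_shift]
            exact hφj (i + 1) (Nat.succ_lt_succ hi)
      · intro h
        by_cases hA : Sat (shift τ 1) (prog ψ (τ 0))
        · exact ⟨0, (ihψ hφ.2 τ).mpr hA, fun i hi => absurd hi (Nat.not_lt_zero i)⟩
        · have hB : Sat (shift τ 1) (.and (prog φ (τ 0)) (.untl φ ψ)) := by
            by_contra hB; exact h ⟨hA, hB⟩
          obtain ⟨hφ0, j, hψj, hφj⟩ := hB
          rw [shift_shift] at hψj
          refine ⟨j + 1, hψj, ?_⟩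
          intro i hi
          rcases i with _ | k
          · exact (ihφ hφ.1 τ).mpr hφ0
          · have := hφj k (Nat.lt_of_succ_lt_succ hi)
            rwa [shift_shift] at this
  | then_ φ ψ ihφ ihψ => exact absurd hφ id

/-- correctness of LTL progression: λ^i ⊨ φ ↔ λ^{i+1} ⊨ prog(φ, lᵢ). -/
theorem prog_correct (φ : SLTL P) (hφ : isLTL φ) (σ : ℕ → Finset P) (i : ℕ) :
    Sat (shift σ i) φ ↔ Sat (shift σ (i + 1)) (prog φ (σ i)) := by
  have h := prog_correct_aux φ hφ (shift σ i)
  rw [shift_shift] at h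
  simpa [shift, Nat.add_comm] using h
end
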